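/- If X is an infinite-dimensional weakly compactly generated real Banach space, then every normal sequence in X* contains a strongly normal subsequence. -/
import Mathlib


open Filter Topology

/-- A Banach space is weakly compactly generated if there is a weakly compact subset
whose closed linear span is the whole space. -/
def WeaklyCompactlyGenerated (X : Type*) [NormedAddCommGroup X] [NormedSpace ℝ X] : Prop :=
  ∃ K : Set X, IsCompact (toWeakSpace ℝ X '' K) ∧
    Dense ((Submodule.span ℝ K : Submodule ℝ X) : Set X)

theorem normal_seq_has_stronglyNormal_subseq_of_WCG
    (X : Type*) [NormedAddCommGroup X] [NormedSpace ℝ X] [CompleteSpace X]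
    (hX : ¬ FiniteDimensional ℝ X) (hwcg : WeaklyCompactlyGenerated X)
    (y : ℕ → (X →L[ℝ] ℝ)) (hnorm : ∀ n, ‖y n‖ = 1)
    (hweakstar : ∀ x : X, Tendsto (fun n => y n x) atTop (𝓝 0)) :
    ∃ φ : ℕ → ℕ, StrictMono φ ∧
      Dense {x : X | Summable fun n => |y (φ n) x|} := by
  classical
  obtain ⟨K, hKcomp, hKdense⟩ := hwcg
  -- The index type of "rational patterns with precision"
  set I : Type := ((Σ n : ℕ, (Fin n → ℚ)) × ℕ) with hI
  have : Nonempty I := ⟨⟨⟨0, fun i => i.elim0⟩, 0⟩⟩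
  -- the property that a pattern is realized (approximately) by some element of `K`
  set P : I → Prop := fun p =>
    ∃ w ∈ K, ∀ i : Fin p.1.1, |y i w - (p.1.2 i : ℝ)| < 1 / (p.2 + 1) with hPdef
  -- Choose witnesses in `K` for realizable patterns.
  set wit : I → X := fun p => if h : P p then h.choose else 0 with hwit
  have hwitP : ∀ p : I, P p →
      wit p ∈ K ∧ ∀ i : Fin p.1.1, |y i (wit p) - (p.1.2 i : ℝ)| < 1 / (p.2 + 1) := by
    intro p hp
    have h1 := hp.choose_spec
    simp only [hwit, dif_pos hp]
    exact ⟨h1.1, h1.2⟩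
  -- enumerate the witnesses
  obtain ⟨e, he⟩ := exists_surjective_nat I
  set v : ℕ → X := fun k => wit (e k) with hv
  -- Diagonalization: a subsequence φ with |y (φ k) (v j)| ≤ (1/2)^k for j ≤ k.
  have hstep : ∀ k N : ℕ, ∃ n : ℕ, N < n ∧ ∀ j ≤ k, |y n (v j)| ≤ (1 / 2 : ℝ) ^ k := by
    intro k N
    have hev : ∀ j : ℕ, ∀ᶠ n in atTop, |y n (v j)| ≤ (1 / 2 : ℝ) ^ k := by
      intro j
      have hpos : (0 : ℝ) < (1 / 2 : ℝ) ^ k := by positivity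
      have hnb : ∀ᶠ t in 𝓝 (0 : ℝ), |t| ≤ (1 / 2 : ℝ) ^ k := by
        filter_upwards [Metric.ball_mem_nhds (0 : ℝ) hpos] with t ht
        rw [Metric.mem_ball, Real.dist_eq, sub_zero] at ht
        exact ht.le
      exact (hweakstar (v j)).eventually hnb
    have hall : ∀ᶠ n in atTop, ∀ j ∈ Set.Iic k, |y n (v j)| ≤ (1 / 2 : ℝ) ^ k :=
      (Set.finite_Iic k).eventually_all.mpr fun j _ => hev j
    obtain ⟨n, h1, h2⟩ := (hall.and (eventually_gt_atTop N)).exists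
    exact ⟨n, h2, fun j hj => h1 j hj⟩
  choose g hg1 hg2 using hstep
  obtain ⟨φ, hφmono, hφbound⟩ :
      ∃ φ : ℕ → ℕ, StrictMono φ ∧ ∀ k, ∀ j ≤ k, |y (φ k) (v j)| ≤ (1 / 2 : ℝ) ^ k := by
    refine ⟨fun k => Nat.rec (g 0 0) (fun m ih => g (m + 1) ih) k, ?_, ?_⟩
    · apply strictMono_nat_of_lt_succ
      intro n
      exact hg1 (n + 1) _
    · intro k j hj
      cases k with
      | zero => exact hg2 0 0 j hj
      | succ m => exact hg2 (m + 1) _ j hj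
  refine ⟨φ, hφmono, ?_⟩
  -- The summability set as a submodule
  set D : Submodule ℝ X :=
    { carrier := {x : X | Summable fun n => |y (φ n) x|}
      add_mem' := by
        intro a b ha hb
        refine Summable.of_nonneg_of_le (fun n => abs_nonneg _) (fun n => ?_) (ha.add hb)
        simp only [map_add]
        exact abs_add_le _ _
      zero_mem' := by
        simp only [Set.mem_setOf_eq, map_zero, abs_zero]
        exact summable_zero
      smul_mem' := by
        intro c a ha
        have h1 : Summable fun n => |c| * |y (φ n) a| := ha.mul_left _
        refine h1.congr fun n => ?_
        rw [map_smul, smul_eq_mul, abs_mul] } with hD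
  -- every `v j` is in `D`
  have hvD : ∀ j, v j ∈ D := by
    intro j
    have : Summable fun n => |y (φ (n + j)) (v j)| := by
      have hgeo : Summable fun n : ℕ => (1 / 2 : ℝ) ^ n * (1 / 2 : ℝ) ^ j :=
        (summable_geometric_of_lt_one (by norm_num) (by norm_num)).mul_right _
      have hgeo' : Summable fun n : ℕ => (1 / 2 : ℝ) ^ (n + j) :=
        hgeo.congr fun n => (pow_add _ n j).symm
      refine Summable.of_nonneg_of_le (fun n => abs_nonneg _) (fun n => ?_) hgeo'
      exact hφbound (n + j) j (Nat.le_add_left j n)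
    exact (summable_nat_add_iff j).mp this
  -- the separable "witness" subspace
  set Z : Set X := closure (Submodule.span ℝ (Set.range v) : Set X) with hZ
  have hZconv : Convex ℝ Z := (Submodule.span ℝ (Set.range v)).convex.closure
  have hZclosed : IsClosed Z := isClosed_closure
  -- evaluation of functionals is weakly continuous
  have hev : ∀ f : X →L[ℝ] ℝ,
      Continuous fun p : WeakSpace ℝ X => f ((toWeakSpace ℝ X).symm p) := by
    intro f
    exact WeakBilin.eval_continuous ((topDualPairing ℝ X).flip) f
  -- Z is weakly closed
  have hZw : IsClosed {p : WeakSpace ℝ X | (toWeakSpace ℝ X).symm p ∈ Z} := by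
    rw [← isOpen_compl_iff]
    rw [isOpen_iff_forall_mem_open]
    intro p hp
    obtain ⟨f, u, hfu, hux⟩ := geometric_hahn_banach_closed_point hZconv hZclosed hp
    refine ⟨{q : WeakSpace ℝ X | u < f ((toWeakSpace ℝ X).symm q)}, ?_, ?_, hux⟩
    · intro q hq hqZ
      exact absurd (hfu _ hqZ) (not_lt.mpr hq.le)
    · exact isOpen_lt continuous_const (hev f)
  -- main claim : K ⊆ closure D
  have hKD : ∀ x ∈ K, x ∈ D.topologicalClosure := by
    intro x hx
    -- the decreasing family of weakly closed constraint sets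
    set F : ℕ → Set (WeakSpace ℝ X) := fun n =>
      {p : WeakSpace ℝ X | (toWeakSpace ℝ X).symm p ∈ Z} ∩
        ⋂ i ∈ Set.Iic n,
          {p : WeakSpace ℝ X |
            |y i ((toWeakSpace ℝ X).symm p) - y i x| ≤ 2 / ((n : ℝ) + 1)} with hF
    have hFclosed : ∀ n, IsClosed (F n) := by
      intro n
      refine hZw.inter (isClosed_biInter fun i _ => ?_)
      exact isClosed_le (((hev (y i)).sub continuous_const).abs) continuous_const
    have hFanti : ∀ m n, n ≤ m → F m ⊆ F n := by
      intro m n hnm p hp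
      refine ⟨hp.1, ?_⟩
      refine Set.mem_biInter fun i hi => ?_
      have h1 : |y i ((toWeakSpace ℝ X).symm p) - y i x| ≤ 2 / ((m : ℝ) + 1) :=
        Set.mem_iInter₂.mp hp.2 i (le_trans hi hnm)
      refine Set.mem_setOf_eq ▸ le_trans h1 ?_
      have hmn : ((n : ℝ) + 1) ≤ ((m : ℝ) + 1) := by
        have : (n : ℝ) ≤ (m : ℝ) := Nat.cast_le.mpr hnm
        linarith
      exact div_le_div_of_nonneg_left (by norm_num) (by positivity) hmn
    -- each constraint set meets the image of K
    have hCne : ∀ n, ((toWeakSpace ℝ X '' K) ∩ F n).Nonempty := by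
      intro n
      have hq : ∀ i : Fin (n + 1), ∃ q : ℚ, |y i x - (q : ℝ)| < 1 / ((n : ℝ) + 1) := by
        intro i
        exact exists_rat_near _ (by positivity)
      choose q hqspec using hq
      have hPp : P ⟨⟨n + 1, q⟩, n⟩ := by
        refine ⟨x, hx, fun i => ?_⟩
        have := hqspec i
        push_cast
        push_cast at this
        exact this
      obtain ⟨hwK, hwq⟩ := hwitP _ hPp
      obtain ⟨k, hk⟩ := he ⟨⟨n + 1, q⟩, n⟩
      have hwZ : wit ⟨⟨n + 1, q⟩, n⟩ ∈ Z := by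
        have h1 : wit ⟨⟨n + 1, q⟩, n⟩ ∈ Set.range v := ⟨k, by rw [hv]; simp [hk]⟩
        exact subset_closure (Submodule.subset_span h1)
      refine ⟨toWeakSpace ℝ X (wit ⟨⟨n + 1, q⟩, n⟩),
        Set.mem_image_of_mem _ hwK, ?_, ?_⟩
      · simpa using hwZ
      · refine Set.mem_biInter fun i hi => ?_
        have hi' : i < n + 1 := Nat.lt_succ_of_le hi
        have h2 := hwq ⟨i, hi'⟩
        have h3 := hqspec ⟨i, hi'⟩
        simp only [Set.mem_setOf_eq, LinearEquiv.symm_apply_apply]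
        have h4 : |y i (wit ⟨⟨n + 1, q⟩, n⟩) - y i x| ≤
            |y i (wit ⟨⟨n + 1, q⟩, n⟩) - (q ⟨i, hi'⟩ : ℝ)| + |(q ⟨i, hi'⟩ : ℝ) - y i x| := by
          have := abs_sub_le (y i (wit ⟨⟨n + 1, q⟩, n⟩)) ((q ⟨i, hi'⟩ : ℝ)) (y i x)
          exact this
        have h2' : |y i (wit ⟨⟨n + 1, q⟩, n⟩) - (q ⟨i, hi'⟩ : ℝ)| < 1 / ((n : ℝ) + 1) := by
          have := h2
          push_cast at this ⊢
          exact this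
        have h3' : |(q ⟨i, hi'⟩ : ℝ) - y i x| < 1 / ((n : ℝ) + 1) := by
          rw [abs_sub_comm]
          exact h3
        have : |y i (wit ⟨⟨n + 1, q⟩, n⟩) - y i x| < 2 / ((n : ℝ) + 1) := by
          calc |y i (wit ⟨⟨n + 1, q⟩, n⟩) - y i x| ≤ _ := h4
            _ < 1 / ((n : ℝ) + 1) + 1 / ((n : ℝ) + 1) := by exact add_lt_add h2' h3'
            _ = 2 / ((n : ℝ) + 1) := by ring
        exact this.le
    -- FIP: the whole intersection is nonempty
    have hinter : ((toWeakSpace ℝ X '' K) ∩ ⋂ n, F n).Nonempty := by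
      by_contra hcon
      rw [Set.not_nonempty_iff_eq_empty] at hcon
      have hcover : (toWeakSpace ℝ X '' K) ⊆ ⋃ n, (F n)ᶜ := by
        intro p hp
        by_contra hp2
        simp only [Set.mem_iUnion, Set.mem_compl_iff, not_exists, not_not] at hp2
        have : p ∈ (toWeakSpace ℝ X '' K) ∩ ⋂ n, F n :=
          ⟨hp, Set.mem_iInter.mpr hp2⟩
        rw [hcon] at this
        exact this
      obtain ⟨s, hs⟩ := hKcomp.elim_finite_subcover (fun n => (F n)ᶜ)
        (fun n => (hFclosed n).isOpen_compl) hcover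
      obtain ⟨p, hpK, hpF⟩ := hCne (s.sup id)
      have := hs hpK
      simp only [Set.mem_iUnion, Set.mem_compl_iff] at this
      obtain ⟨n, hns, hpn⟩ := this
      exact hpn (hFanti (s.sup id) n (Finset.le_sup (f := id) hns) hpF)
    obtain ⟨p, hpK, hpF⟩ := hinter
    set z : X := (toWeakSpace ℝ X).symm p with hz
    have hzF : ∀ n, p ∈ F n := Set.mem_iInter.mp hpF
    have hzZ : z ∈ Z := (hzF 0).1
    have hzeq : ∀ m, y m z = y m x := by
      intro m
      by_contra hne
      have hδ : 0 < |y m z - y m x| := abs_pos.mpr (sub_ne_zero.mpr hne)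
      obtain ⟨n, hn⟩ := exists_nat_gt (max (m : ℝ) (2 / |y m z - y m x|))
      have hnm : m ≤ n := by
        have := (le_max_left (m : ℝ) _).trans_lt hn
        exact_mod_cast this.le
      have hb : |y m z - y m x| ≤ 2 / ((n : ℝ) + 1) :=
        Set.mem_iInter₂.mp (hzF n).2 m hnm
      have h2 : 2 / |y m z - y m x| < (n : ℝ) + 1 := by
        have := (le_max_right (m : ℝ) (2 / |y m z - y m x|)).trans_lt hn
        linarith
      have h3 : 2 / ((n : ℝ) + 1) < |y m z - y m x| := by
        rw [div_lt_iff₀ (by positivity)]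
        rw [div_lt_iff₀ hδ] at h2
        linarith [mul_comm ((n : ℝ) + 1) |y m z - y m x|]
      linarith
    -- conclude
    have hzDc : z ∈ D.topologicalClosure := by
      have hsub : (Submodule.span ℝ (Set.range v) : Set X) ⊆ (D : Set X) := by
        have : Submodule.span ℝ (Set.range v) ≤ D :=
          Submodule.span_le.mpr (Set.range_subset_iff.mpr hvD)
        exact this
      have : Z ⊆ closure (D : Set X) := by
        rw [hZ]
        exact closure_mono hsub
      have := this hzZ
      rwa [← Submodule.topologicalClosure_coe] at this
    have hxzD : x - z ∈ D := by
      have : Summable fun n : ℕ => |y (φ n) (x - z)| := by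
        have h0 : ∀ n : ℕ, |y (φ n) (x - z)| = 0 := by
          intro n
          rw [map_sub, hzeq (φ n), sub_self, abs_zero]
        exact summable_zero.congr fun n => (h0 n).symm
      exact this
    have : x = z + (x - z) := by abel
    rw [this]
    exact D.topologicalClosure.add_mem hzDc (D.le_topologicalClosure hxzD)
  -- finish: closure of D contains the dense span of K
  have hspan : (Submodule.span ℝ K : Set X) ⊆ (D.topologicalClosure : Set X) := by
    have : Submodule.span ℝ K ≤ D.topologicalClosure :=
      Submodule.span_le.mpr hKD
    exact this
  have : Dense (D : Set X) := by
    rw [dense_iff_closure_eq]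
    apply Set.eq_univ_of_univ_subset
    calc (Set.univ : Set X) = closure (Submodule.span ℝ K : Set X) :=
          (dense_iff_closure_eq.mp hKdense).symm
      _ ⊆ closure (D.topologicalClosure : Set X) := closure_mono hspan
      _ = closure (closure (D : Set X)) := by rw [Submodule.topologicalClosure_coe]
      _ = closure (D : Set X) := closure_closure
  exact this
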